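/- In a pre-Hilbert left 𝕆-module H, for all u, v ∈ H and p, q ∈ 𝕆, the real parts satisfy Re⟨[p,q,u], v⟩ = −Re⟨u, [p,q,v]⟩, where [p,q,x] := (pq)·x − p·(q·x). -/

import Mathlib

noncomputable section

/-- The octonions, realized as the Cayley–Dickson double of the quaternions. -/
abbrev 𝕆 : Type := Quaternion ℝ × Quaternion ℝ

/-- Octonion multiplication via the Cayley–Dickson formula
`(a,b)(c,d) = (ac - d̄b, da + bc̄)`. -/
def omul (x y : 𝕆) : 𝕆 :=
  (x.1 * y.1 - star y.2 * x.2, y.2 * x.1 + x.2 * star y.1)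

/-- Octonionic conjugation. -/
def oconj (x : 𝕆) : 𝕆 := (star x.1, -x.2)

/-- The octonion `1`. -/
def oone : 𝕆 := (1, 0)

/-- Real part of an octonion. -/
def ore (x : 𝕆) : ℝ := x.1.re

/-- Embedding of the reals into the octonions. -/
def oreal (r : ℝ) : 𝕆 := ((r : Quaternion ℝ), 0)

/-- Squared norm of an octonion. -/
def onormSq (x : 𝕆) : ℝ := ore (omul x (oconj x))

/-- A pre-Hilbert left `𝕆`-module: a real vector space `H` with an `ℝ`-linear
left `𝕆`-scalar multiplication `sm` satisfying `1·x = x` and the alternating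
left-associator law, together with an `ℝ`-bilinear `𝕆`-valued inner product `inn`
which is `𝕆`-para-linear, hermitian and positive definite. -/
structure PreHilbO (H : Type*) [AddCommGroup H] [Module ℝ H] where
  sm : 𝕆 →ₗ[ℝ] H →ₗ[ℝ] H
  inn : H →ₗ[ℝ] H →ₗ[ℝ] 𝕆
  one_sm : ∀ x : H, sm oone x = x
  alt : ∀ (p q : 𝕆) (x : H),
    sm (omul p q) x - sm p (sm q x) = -(sm (omul q p) x - sm q (sm p x))
  para : ∀ (p : 𝕆) (u v : H), ore (inn (sm p u) v - omul p (inn u v)) = 0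
  herm : ∀ u v : H, inn u v = oconj (inn v u)
  pos : ∀ u : H, ∃ r : ℝ, 0 ≤ r ∧ inn u u = oreal r
  posdef : ∀ u : H, inn u u = 0 → u = 0

/-! The real part of the inner product makes `p·` and `p̄·` adjoint, so the adjoint of the
associator `[p,q,·]` is `[q̄,p̄,·]`. Since `p̄ = 2 Re p - p` and associators with a real entry
vanish, `[q̄,p̄,·] = [q,p,·]`, which is `-[p,q,·]` by alternativity. -/

lemma ore_sub (a b : 𝕆) : ore (a - b) = ore a - ore b := by simp [ore]

lemma ore_neg (a : 𝕆) : ore (-a) = -ore a := by simp [ore]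

lemma ore_oconj (a : 𝕆) : ore (oconj a) = ore a := by simp [ore, oconj]

lemma ore_omul_oconj_oconj (p a : 𝕆) : ore (omul (oconj p) (oconj a)) = ore (omul p a) := by
  simp [ore, omul, oconj, Quaternion.re_mul]

lemma oconj_omul (x y : 𝕆) : oconj (omul x y) = omul (oconj y) (oconj x) := by
  simp [omul, oconj, star_mul, sub_eq_add_neg]

lemma oconj_eq_oreal_sub (p : 𝕆) : oconj p = oreal (2 * ore p) - p := by
  ext <;> simp [oconj, oreal, ore]; ring

lemma oreal_eq_smul_oone (r : ℝ) : oreal r = r • oone := by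
  simp [oreal, oone, Prod.ext_iff, Quaternion.ext_iff, Quaternion.re_one, Quaternion.imI_one,
    Quaternion.imJ_one, Quaternion.imK_one]

lemma oreal_omul (r : ℝ) (q : 𝕆) : omul (oreal r) q = r • q := by
  simp [omul, oreal, Prod.ext_iff, Quaternion.ext_iff, Quaternion.re_mul, mul_comm]

lemma omul_oreal (q : 𝕆) (r : ℝ) : omul q (oreal r) = r • q := by
  simp [omul, oreal, Prod.ext_iff, Quaternion.ext_iff, Quaternion.re_mul, mul_comm]

lemma sub_omul (x y z : 𝕆) : omul (x - y) z = omul x z - omul y z := by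
  refine Prod.ext ?_ ?_ <;> simp only [omul, Prod.fst_sub, Prod.snd_sub, sub_mul, mul_sub] <;> abel

lemma omul_sub (x y z : 𝕆) : omul x (y - z) = omul x y - omul x z := by
  refine Prod.ext ?_ ?_ <;>
    simp only [omul, Prod.fst_sub, Prod.snd_sub, sub_mul, mul_sub, star_sub] <;> abel

namespace PreHilbO

variable {H : Type*} [AddCommGroup H] [Module ℝ H] (h : PreHilbO H)

def assoc (p q : 𝕆) (x : H) : H := h.sm (omul p q) x - h.sm p (h.sm q x)

lemma sm_oreal (r : ℝ) (x : H) : h.sm (oreal r) x = r • x := by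
  rw [oreal_eq_smul_oone, map_smul, LinearMap.smul_apply, h.one_sm]

lemma assoc_oreal_left (r : ℝ) (q : 𝕆) (x : H) : h.assoc (oreal r) q x = 0 := by
  rw [assoc, oreal_omul, map_smul, LinearMap.smul_apply, sm_oreal, sub_self]

lemma assoc_oreal_right (p : 𝕆) (r : ℝ) (x : H) : h.assoc p (oreal r) x = 0 := by
  rw [assoc, omul_oreal, map_smul, LinearMap.smul_apply, sm_oreal, map_smul, sub_self]

lemma assoc_sub_left (p p' q : 𝕆) (x : H) :
    h.assoc (p - p') q x = h.assoc p q x - h.assoc p' q x := by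
  simp only [assoc, sub_omul, map_sub, LinearMap.sub_apply]
  abel

lemma assoc_sub_right (p q q' : 𝕆) (x : H) :
    h.assoc p (q - q') x = h.assoc p q x - h.assoc p q' x := by
  simp only [assoc, omul_sub, map_sub, LinearMap.sub_apply]
  abel

lemma assoc_oconj_oconj (p q : 𝕆) (x : H) : h.assoc (oconj p) (oconj q) x = h.assoc p q x := by
  rw [oconj_eq_oreal_sub p, oconj_eq_oreal_sub q, assoc_sub_left, assoc_sub_right,
    assoc_sub_right, assoc_oreal_left, assoc_oreal_left, assoc_oreal_right]
  abel

lemma assoc_swap (p q : 𝕆) (x : H) : h.assoc q p x = -h.assoc p q x :=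
  h.alt q p x

lemma re_inn_sm (p : 𝕆) (u v : H) : ore (h.inn (h.sm p u) v) = ore (omul p (h.inn u v)) := by
  rw [← sub_eq_zero, ← ore_sub, h.para]

lemma re_inn_sm_eq_re_inn_sm_oconj (p : 𝕆) (u v : H) :
    ore (h.inn (h.sm p u) v) = ore (h.inn u (h.sm (oconj p) v)) := by
  rw [re_inn_sm, h.herm u (h.sm (oconj p) v), ore_oconj, re_inn_sm, h.herm v u,
    ore_omul_oconj_oconj]

lemma re_inn_assoc_eq_re_inn_assoc_oconj (p q : 𝕆) (u v : H) :
    ore (h.inn (h.assoc p q u) v) = ore (h.inn u (h.assoc (oconj q) (oconj p) v)) := by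
  simp only [assoc, map_sub, LinearMap.sub_apply, ore_sub]
  rw [re_inn_sm_eq_re_inn_sm_oconj, oconj_omul, re_inn_sm_eq_re_inn_sm_oconj,
    re_inn_sm_eq_re_inn_sm_oconj]

end PreHilbO

/-- In a pre-Hilbert left octonionic module:
Re (inn [p,q,u] v) = - Re (inn u [p,q,v]). -/
theorem stmt_6 {H : Type*} [AddCommGroup H] [Module ℝ H] (h : PreHilbO H)
    (p q : 𝕆) (u v : H) :
    ore (h.inn (h.sm (omul p q) u - h.sm p (h.sm q u)) v)
      = -ore (h.inn u (h.sm (omul p q) v - h.sm p (h.sm q v))) := by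
  change ore (h.inn (h.assoc p q u) v) = -ore (h.inn u (h.assoc p q v))
  rw [h.re_inn_assoc_eq_re_inn_assoc_oconj, h.assoc_oconj_oconj, h.assoc_swap, map_neg, ore_neg]
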